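/- arXiv:2101.00498 — 2 statements merged into one kernel-verified Lean document; each statement's English description precedes it below -/
import Mathlib

section
/- Let X be a compact metric space and f : X → X a homeomorphism. Then f is c-expansive without doubly asymptotic pairs of distinct points if and only if there exists c' > 0 such that for all distinct x, y ∈ X, the set {n ∈ ℤ : d(fⁿ(x), fⁿ(y)) > c'} is infinite. -/
/-!
For `c`-expansive `f`, a pair whose orbit distances are eventually `≤ c` in forward time is
forward asymptotic: every cluster point `(p, q)` of the forward orbit of the pair still has all
orbit distances `≤ c`, hence `p = q`, so by compactness the distances tend to `0`. Backward time
is forward time for `f⁻¹`. Since a subset of `ℤ` is infinite iff it is unbounded above or below,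
"no doubly asymptotic pairs" then says exactly that the set of times at which the orbits are
`c`-apart is infinite.
-/

open Filter Topology

namespace Equiv.Perm

theorem continuous_zpow {X : Type*} [TopologicalSpace X] {f : Perm X} (hf : Continuous f)
    (hf' : Continuous f.symm) : ∀ n : ℤ, Continuous ⇑(f ^ n)
  | (n : ℕ) => by simpa only [zpow_natCast, coe_pow] using hf.iterate n
  | .negSucc n => by simpa only [zpow_negSucc, ← inv_pow, coe_pow, inv_def] using hf'.iterate (n + 1)

variable {X : Type*} [MetricSpace X] {f : Perm X} {c : ℝ}

theorem dist_zpow_le_of_mapClusterPt (hf : Continuous f) (hf' : Continuous f.symm) {x y : X}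
    (h : ∀ᶠ n : ℤ in atTop, dist ((f ^ n) x) ((f ^ n) y) ≤ c) {z : X × X}
    (hz : MapClusterPt z atTop fun n : ℤ => ((f ^ n) x, (f ^ n) y)) (j : ℤ) :
    dist ((f ^ j) z.1) ((f ^ j) z.2) ≤ c := by
  have hj := continuous_zpow hf hf' j
  have hshift : MapClusterPt (Prod.map (f ^ j) (f ^ j) z) atTop
      fun n : ℤ => ((f ^ (j + n)) x, (f ^ (j + n)) y) := by
    simpa only [zpow_add, mul_apply, Function.comp_def, Prod.map] using
      hz.continuousAt_comp (hj.prodMap hj).continuousAt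
  exact (isClosed_le (continuous_fst.dist continuous_snd) continuous_const).mem_of_mapClusterPt
    hshift ((tendsto_atTop_add_const_left _ j tendsto_id).eventually h)

theorem tendsto_dist_zpow_atTop_of_eventually_le [CompactSpace X] (hf : Continuous f)
    (hf' : Continuous f.symm)
    (hexp : ∀ x y : X, x ≠ y → ∃ n : ℤ, dist ((f ^ n) x) ((f ^ n) y) > c) {x y : X}
    (h : ∀ᶠ n : ℤ in atTop, dist ((f ^ n) x) ((f ^ n) y) ≤ c) :
    Tendsto (fun n : ℤ => dist ((f ^ n) x) ((f ^ n) y)) atTop (𝓝 0) := by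
  refine tendsto_order.2 ⟨fun a ha => .of_forall fun n => ha.trans_le dist_nonneg,
    fun ε hε => ?_⟩
  by_contra hfar
  simp only [not_eventually, not_lt] at hfar
  obtain ⟨z, hzε, hz⟩ := (isClosed_le continuous_const
    (continuous_fst.dist continuous_snd)).isCompact.exists_mapClusterPt_of_frequently
    (f := fun n : ℤ => ((f ^ n) x, (f ^ n) y)) hfar
  obtain ⟨j, hj⟩ := hexp z.1 z.2 (dist_pos.1 (hε.trans_le hzε))
  exact (dist_zpow_le_of_mapClusterPt hf hf' h hz j).not_gt hj

theorem tendsto_dist_zpow_atBot_of_eventually_le [CompactSpace X] (hf : Continuous f)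
    (hf' : Continuous f.symm)
    (hexp : ∀ x y : X, x ≠ y → ∃ n : ℤ, dist ((f ^ n) x) ((f ^ n) y) > c) {x y : X}
    (h : ∀ᶠ n : ℤ in atBot, dist ((f ^ n) x) ((f ^ n) y) ≤ c) :
    Tendsto (fun n : ℤ => dist ((f ^ n) x) ((f ^ n) y)) atBot (𝓝 0) := by
  have hexp_inv : ∀ x y : X, x ≠ y → ∃ n : ℤ, dist ((f⁻¹ ^ n) x) ((f⁻¹ ^ n) y) > c :=
    fun x y hxy => (hexp x y hxy).imp' Neg.neg fun n hn => by rwa [inv_zpow', neg_neg]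
  have h_inv : ∀ᶠ n : ℤ in atTop, dist ((f⁻¹ ^ n) x) ((f⁻¹ ^ n) y) ≤ c := by
    simpa only [inv_zpow'] using tendsto_neg_atTop_atBot.eventually h
  have := (tendsto_dist_zpow_atTop_of_eventually_le (f := f⁻¹) hf' hf hexp_inv h_inv).comp
    tendsto_neg_atBot_atTop
  simpa only [Function.comp_def, inv_zpow', neg_neg] using this

end Equiv.Perm

theorem Int.infinite_setOf_iff_frequently {p : ℤ → Prop} :
    {n | p n}.Infinite ↔ (∃ᶠ n in atBot, p n) ∨ ∃ᶠ n in atTop, p n := by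
  rw [← frequently_cofinite_iff_infinite, Int.cofinite_eq, frequently_sup]

open Equiv.Perm in
theorem stmt_8 {X : Type*} [MetricSpace X] [CompactSpace X]
    (f : X ≃ X) (hf : Continuous f) (hf' : Continuous f.symm) :
    ((∃ c > 0, ∀ x y : X, x ≠ y → ∃ n : ℤ, dist ((f ^ n) x) ((f ^ n) y) > c) ∧
      (∀ x y : X, x ≠ y →
        ¬ (Tendsto (fun n : ℤ => dist ((f ^ n) x) ((f ^ n) y)) atTop (𝓝 0) ∧
           Tendsto (fun n : ℤ => dist ((f ^ n) x) ((f ^ n) y)) atBot (𝓝 0)))) ↔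
    (∃ c' > 0, ∀ x y : X, x ≠ y →
      {n : ℤ | dist ((f ^ n) x) ((f ^ n) y) > c'}.Infinite) := by
  constructor
  · rintro ⟨⟨c, hc, hexp⟩, hnot_asymp⟩
    refine ⟨c, hc, fun x y hxy => ?_⟩
    by_contra hfin
    simp only [Int.infinite_setOf_iff_frequently, not_or, not_frequently, not_lt] at hfin
    exact hnot_asymp x y hxy ⟨tendsto_dist_zpow_atTop_of_eventually_le hf hf' hexp hfin.2,
      tendsto_dist_zpow_atBot_of_eventually_le hf hf' hexp hfin.1⟩
  · rintro ⟨c', hc', hinf⟩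
    refine ⟨⟨c', hc', fun x y hxy => (hinf x y hxy).nonempty⟩, fun x y hxy ⟨hTop, hBot⟩ => ?_⟩
    have hnear {l : Filter ℤ} [l.NeBot]
        (hl : Tendsto (fun n : ℤ => dist ((f ^ n) x) ((f ^ n) y)) l (𝓝 0)) :
        ¬∃ᶠ n in l, dist ((f ^ n) x) ((f ^ n) y) > c' := fun hfar =>
      let ⟨_, hgt, hlt⟩ := (hfar.and_eventually (hl.eventually (gt_mem_nhds hc'))).exists
      hgt.not_gt hlt
    rcases Int.infinite_setOf_iff_frequently.1 (hinf x y hxy) with hfar | hfar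
    exacts [hnear hBot hfar, hnear hTop hfar]
end

section
/- Let X be a compact metric space, f : X → X a homeomorphism, and c > 0 such that for all distinct x, y ∈ X there exists n ∈ ℤ with d(fⁿ(x), fⁿ(y)) > c. Suppose x, y ∈ X are distinct and there exist sequences (n_k) in ℤ with |n_k| → ∞ and reals α > 0 with d(f^{n_k}(x), f^{n_k}(y)) > α for all k. Then the set {n ∈ ℤ : d(fⁿ(x), fⁿ(y)) > c/2} is infinite. -/
/-!
Pass to a cluster point `(a, b)` of the pairs `(f^{n_k} x, f^{n_k} y)`; it lies at distance
at least `α`, so `a ≠ b` and expansivity gives `m` with `d(f^m a, f^m b) > c`. By continuity of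
`f^m`, `d(f^{m + n_k} x, f^{m + n_k} y) > c/2` for infinitely many `k`, and since `|n_k| → ∞`
the times `m + n_k` take infinitely many values.
-/

open Filter Topology

theorem Equiv.Perm.continuous_zpow_s15 {X : Type*} [TopologicalSpace X] {f : Equiv.Perm X}
    (hf : Continuous f) (hf' : Continuous f.symm) : ∀ n : ℤ, Continuous ⇑(f ^ n)
  | (n : ℕ) => by
    rw [zpow_natCast, Equiv.Perm.coe_pow]
    exact hf.iterate n
  | .negSucc n => by
    rw [zpow_negSucc, ← inv_pow, Equiv.Perm.coe_pow, Equiv.Perm.inv_def]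
    exact hf'.iterate _

theorem Int.tendsto_cofinite_of_tendsto_abs {ι : Type*} {l : Filter ι} {n : ι → ℤ}
    (hn : Tendsto (fun k => |n k|) l atTop) : Tendsto n l cofinite := by
  rw [Int.cofinite_eq, ← comap_abs_atTop]
  exact tendsto_comap_iff.mpr hn

theorem exists_mapClusterPt_prod_of_le_dist {X ι : Type*} [PseudoMetricSpace X] [CompactSpace X]
    {l : Filter ι} [l.NeBot] {u v : ι → X} {α : ℝ} (h : ∀ k, α ≤ dist (u k) (v k)) :
    ∃ a b : X, α ≤ dist a b ∧ MapClusterPt (a, b) l (fun k => (u k, v k)) := by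
  have hclosed : IsClosed {p : X × X | α ≤ dist p.1 p.2} :=
    isClosed_le continuous_const continuous_dist
  obtain ⟨⟨a, b⟩, hab, hclus⟩ :=
    hclosed.isCompact.exists_mapClusterPt_of_frequently
      (f := fun k => (u k, v k)) (Frequently.of_forall (f := l) h)
  exact ⟨a, b, hab, hclus⟩

theorem Equiv.Perm.infinite_setOf_lt_dist_zpow {X ι : Type*} [PseudoMetricSpace X]
    {f : Equiv.Perm X} {l : Filter ι} {n : ι → ℤ} (hn : Tendsto n l cofinite) {x y a b : X}
    (hab : MapClusterPt (a, b) l (fun k => ((f ^ n k) x, (f ^ n k) y)))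
    {m : ℤ} (hm : Continuous ⇑(f ^ m)) {r : ℝ} (hr : r < dist ((f ^ m) a) ((f ^ m) b)) :
    {n : ℤ | r < dist ((f ^ n) x) ((f ^ n) y)}.Infinite := by
  have hopen : IsOpen {p : X × X | r < dist ((f ^ m) p.1) ((f ^ m) p.2)} :=
    isOpen_lt continuous_const ((hm.comp continuous_fst).dist (hm.comp continuous_snd))
  have hfreq : ∃ᶠ k in l, m + n k ∈ {n : ℤ | r < dist ((f ^ n) x) ((f ^ n) y)} :=
    (hab.frequently (hopen.mem_nhds hr)).mono fun k hk => by
      simpa only [Set.mem_ofPred_eq, zpow_add, Equiv.Perm.mul_apply] using hk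
  exact frequently_cofinite_mem_iff_infinite.mp
    (((add_right_injective m).tendsto_cofinite.comp hn).frequently hfreq)

theorem stmt_15_general {X : Type*} [MetricSpace X] [CompactSpace X]
    (f : X ≃ X) (hf : Continuous f) (hf' : Continuous f.symm)
    (c : ℝ)
    (hexp : ∀ x y : X, x ≠ y → ∃ n : ℤ, dist ((f ^ n) x) ((f ^ n) y) > c)
    (x y : X)
    (hsep : ∃ n : ℕ → ℤ, ∃ α > (0 : ℝ),
      Tendsto (fun k : ℕ => |n k|) atTop atTop ∧
      ∀ k : ℕ, dist ((f ^ n k) x) ((f ^ n k) y) > α) :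
    {n : ℤ | dist ((f ^ n) x) ((f ^ n) y) > c / 2}.Infinite := by
  obtain ⟨n, α, hα, hn, hd⟩ := hsep
  obtain ⟨a, b, hαab, hclus⟩ :=
    exists_mapClusterPt_prod_of_le_dist (l := atTop) fun k => (hd k).le
  obtain ⟨m, hm⟩ := hexp a b (dist_pos.mp (hα.trans_le hαab))
  exact Equiv.Perm.infinite_setOf_lt_dist_zpow (Int.tendsto_cofinite_of_tendsto_abs hn) hclus
    (Equiv.Perm.continuous_zpow_s15 hf hf' m)
    (by linarith [dist_nonneg (x := (f ^ m) a) (y := (f ^ m) b)])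

theorem stmt_15 {X : Type*} [MetricSpace X] [CompactSpace X]
    (f : X ≃ X) (hf : Continuous f) (hf' : Continuous f.symm)
    (c : ℝ) (hc : 0 < c)
    (hexp : ∀ x y : X, x ≠ y → ∃ n : ℤ, dist ((f ^ n) x) ((f ^ n) y) > c)
    (x y : X) (hxy : x ≠ y)
    (hsep : ∃ n : ℕ → ℤ, ∃ α > (0 : ℝ),
      Tendsto (fun k : ℕ => |n k|) atTop atTop ∧
      ∀ k : ℕ, dist ((f ^ n k) x) ((f ^ n k) y) > α) :
    {n : ℤ | dist ((f ^ n) x) ((f ^ n) y) > c / 2}.Infinite :=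
  stmt_15_general f hf hf' c hexp x y hsep
end
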